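/- Let G be a t.d.l.c. group. If P is a finitely generated proper discrete permutation Q[G]-module, then the functor − ⊗_G P (from discrete right Q[G]-modules to Q-vector spaces) commutes with limits: for every diagram M_* of discrete right Q[G]-modules, the natural homomorphism (d lim M_*) ⊗_G P → lim (M_* ⊗_G P) is an isomorphism of Q-vector spaces, where d lim denotes the limit in the category of discrete Q[G]-modules (obtained by applying the discretization functor d, taking the submodule of elements with open stabilizer, to the limit of abstract modules) and lim the limit of abstract Q-modules. -/

import Mathlib

noncomputable section

open scoped Pointwise

/-- A bundled `G`-set. -/
structure GSet (G : Type) [Group G] where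
  carrier : Type
  [mulAction : MulAction G carrier]

attribute [instance] GSet.mulAction

/-- All point stabilizers of the `G`-action on `Ω` are open. -/
def OpenStabilizers (G : Type) [Group G] [TopologicalSpace G] (Ω : Type) [MulAction G Ω] : Prop :=
  ∀ ω : Ω, IsOpen {g : G | g • ω = ω}

/-- All point stabilizers of the `G`-action on `Ω` are compact. -/
def CompactStabilizers (G : Type) [Group G] [TopologicalSpace G] (Ω : Type) [MulAction G Ω] :
    Prop :=
  ∀ ω : Ω, IsCompact {g : G | g • ω = ω}

/-- The `G`-action on `Ω` has finitely many orbits. -/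
def FinitelyManyOrbits (G : Type) [Group G] (Ω : Type) [MulAction G Ω] : Prop :=
  Finite (Quotient (MulAction.orbitRel G Ω))

/-- A module with a `G`-action is a *discrete* module if all element stabilizers are open. -/
def IsDiscreteModule (G : Type) [Group G] [TopologicalSpace G] (M : Type) [AddCommMonoid M]
    [DistribMulAction G M] : Prop :=
  ∀ m : M, IsOpen {g : G | g • m = m}

/-- A submodule `K` (of a module with commuting `R`- and `G`-actions) is finitely generated
as an `R[G]`-module: there is a finite subset of `K` such that every element of `K` lies in the
`R`-span of its `G`-translates. -/
def SubmoduleFGOver (R : Type) [CommRing R] (G : Type) [Group G] {M : Type} [AddCommGroup M]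
    [Module R M] (act : G → M → M) (K : Submodule R M) : Prop :=
  ∃ s : Finset M, (↑s : Set M) ⊆ (K : Set M) ∧
    ∀ m ∈ K, m ∈ Submodule.span R {x : M | ∃ g : G, ∃ y ∈ s, x = act g y}

/-- A resolution of the `R[G]`-module `M` by proper discrete permutation modules:
an exact sequence `⋯ → R[Ω₁] → R[Ω₀] → M → 0` where each `Ωₖ` is a `G`-set with
compact open stabilizers. -/
structure DiscretePermResolution (R : Type) [CommRing R] (G : Type) [Group G]
    [TopologicalSpace G] (M : Type) [AddCommGroup M] [Module R M] [DistribMulAction G M] where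
  Ω : ℕ → GSet G
  openStab : ∀ k, OpenStabilizers G (Ω k).carrier
  compactStab : ∀ k, CompactStabilizers G (Ω k).carrier
  d : ∀ k, ((Ω (k+1)).carrier →₀ R) →ₗ[R] ((Ω k).carrier →₀ R)
  ε : ((Ω 0).carrier →₀ R) →ₗ[R] M
  d_equivariant : ∀ (k : ℕ) (g : G) (x : (Ω (k+1)).carrier →₀ R),
      d k (Finsupp.mapDomain (g • ·) x) = Finsupp.mapDomain (g • ·) (d k x)
  ε_equivariant : ∀ (g : G) (x : (Ω 0).carrier →₀ R),
      ε (Finsupp.mapDomain (g • ·) x) = g • ε x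
  ε_surj : Function.Surjective ε
  exact₀ : Function.Exact (d 0) ε
  exact : ∀ k, Function.Exact (d (k+1)) (d k)

/-- The discrete `R[G]`-module `M` has type `FP_n` over `R` : it admits a proper discrete
permutation resolution which is finitely generated in all degrees `k ≤ n`. -/
def ModuleOfTypeFP (R : Type) [CommRing R] (G : Type) [Group G] [TopologicalSpace G]
    (M : Type) [AddCommGroup M] [Module R M] [DistribMulAction G M] (n : ℕ∞) : Prop :=
  ∃ P : DiscretePermResolution R G M, ∀ k : ℕ, (k : ℕ∞) ≤ n → FinitelyManyOrbits G (P.Ω k).carrier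

/-- A resolution of the trivial `R[G]`-module `R` by proper discrete permutation modules. -/
structure GroupPermResolution (R : Type) [CommRing R] (G : Type) [Group G]
    [TopologicalSpace G] where
  Ω : ℕ → GSet G
  openStab : ∀ k, OpenStabilizers G (Ω k).carrier
  compactStab : ∀ k, CompactStabilizers G (Ω k).carrier
  d : ∀ k, ((Ω (k+1)).carrier →₀ R) →ₗ[R] ((Ω k).carrier →₀ R)
  ε : ((Ω 0).carrier →₀ R) →ₗ[R] R
  d_equivariant : ∀ (k : ℕ) (g : G) (x : (Ω (k+1)).carrier →₀ R),
      d k (Finsupp.mapDomain (g • ·) x) = Finsupp.mapDomain (g • ·) (d k x)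
  ε_equivariant : ∀ (g : G) (x : (Ω 0).carrier →₀ R),
      ε (Finsupp.mapDomain (g • ·) x) = ε x
  ε_surj : Function.Surjective ε
  exact₀ : Function.Exact (d 0) ε
  exact : ∀ k, Function.Exact (d (k+1)) (d k)

/-- The t.d.l.c. group `G` has type `FP_n` over `R`: the trivial discrete `R[G]`-module `R`
admits a proper discrete permutation resolution, finitely generated in degrees `≤ n`. -/
def GroupOfTypeFP (R : Type) [CommRing R] (G : Type) [Group G] [TopologicalSpace G]
    (n : ℕ∞) : Prop :=
  ∃ P : GroupPermResolution R G, ∀ k : ℕ, (k : ℕ∞) ≤ n → FinitelyManyOrbits G (P.Ω k).carrier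

/-- A discrete `G`-CW-complex, described via characteristic maps: a Hausdorff space with a
continuous cell-permuting `G`-action, cells indexed by `G`-sets with open stabilizers,
boundary spheres attached to lower skeleta, open cells partitioning the space, and carrying
the weak topology determined by the closed cells. -/
structure DiscreteGCW (G : Type) [Group G] [TopologicalSpace G] where
  space : Type
  [topo : TopologicalSpace space]
  [t2 : T2Space space]
  nonempty : Nonempty space
  [act : MulAction G space]
  continuous_smul : Continuous fun p : G × space => p.1 • p.2
  cells : ℕ → GSet G
  cellOpenStab : ∀ n, OpenStabilizers G (cells n).carrier
  char : ∀ n, (cells n).carrier → EuclideanSpace ℝ (Fin n) → space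
  char_contOn : ∀ n c, ContinuousOn (char n c) (Metric.closedBall 0 1)
  char_equivariant : ∀ (n : ℕ) (g : G) (c : (cells n).carrier) (x : EuclideanSpace ℝ (Fin n)),
      x ∈ Metric.closedBall (0 : EuclideanSpace ℝ (Fin n)) 1 →
        char n (g • c) x = g • char n c x
  sphere_boundary : ∀ (n : ℕ) (c : (cells (n+1)).carrier) (x : EuclideanSpace ℝ (Fin (n+1))),
      ‖x‖ = 1 → ∃ m ≤ n, ∃ c' : (cells m).carrier,
        ∃ y ∈ Metric.closedBall (0 : EuclideanSpace ℝ (Fin m)) 1, char (n+1) c x = char m c' y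
  cell_partition : ∀ p : space,
      ∃! q : Σ n : ℕ, (cells n).carrier × EuclideanSpace ℝ (Fin n),
        ‖q.2.2‖ < 1 ∧ char q.1 q.2.1 q.2.2 = p
  weak_topology : ∀ A : Set space, IsClosed A ↔ ∀ (n : ℕ) (c : (cells n).carrier),
      IsClosed ((fun x : Metric.closedBall (0 : EuclideanSpace ℝ (Fin n)) 1 =>
        char n c ↑x) ⁻¹' A)

attribute [instance] DiscreteGCW.topo DiscreteGCW.t2 DiscreteGCW.act

/-- `X` is a proper discrete `G`-CW-complex: the cell stabilizers are compact (and open). -/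
def DiscreteGCW.Proper {G : Type} [Group G] [TopologicalSpace G] (X : DiscreteGCW G) : Prop :=
  ∀ n, CompactStabilizers G (X.cells n).carrier

/-- `X` is of type `F_n`: there are finitely many `G`-orbits of `k`-cells for all `k ≤ n`. -/
def DiscreteGCW.FiniteType {G : Type} [Group G] [TopologicalSpace G] (X : DiscreteGCW G)
    (n : ℕ∞) : Prop :=
  ∀ k : ℕ, (k : ℕ∞) ≤ n → FinitelyManyOrbits G (X.cells k).carrier

/-- The t.d.l.c. group `G` has type `F_n`: there is a contractible proper discrete
`G`-CW-complex of type `F_n`. -/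
def GroupOfTypeF (G : Type) [Group G] [TopologicalSpace G] (n : ℕ∞) : Prop :=
  ∃ X : DiscreteGCW G, ContractibleSpace X.space ∧ X.Proper ∧ X.FiniteType n

/-- A topological group is compactly generated if it is generated by a compact subset. -/
def CompactlyGeneratedGroup (G : Type) [Group G] [TopologicalSpace G] : Prop :=
  ∃ S : Set G, IsCompact S ∧ Subgroup.closure S = ⊤

/-- A topological group is compactly presented if it admits a presentation `⟨S ∣ R⟩`, as an
abstract group, with `S` a compact set of generators and the relators in `R` of bounded
length. -/
def CompactlyPresentedGroup (G : Type) [Group G] [TopologicalSpace G] : Prop :=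
  ∃ S : Set G, IsCompact S ∧
    Function.Surjective (FreeGroup.lift (fun s : S => (s : G))) ∧
    ∃ n : ℕ,
      Subgroup.normalClosure
          {w : FreeGroup S | FreeGroup.lift (fun s : S => (s : G)) w = 1 ∧
            ∃ l : List (S × Bool), FreeGroup.mk l = w ∧ l.length ≤ n}
        = MonoidHom.ker (FreeGroup.lift (fun s : S => (s : G)))

open scoped TensorProduct

/-- A bundled discrete right `ℚ[G]`-module. -/
structure DRMod (G : Type) [Group G] [TopologicalSpace G] where
  M : Type
  [acg : AddCommGroup M]
  [mod : Module ℚ M]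
  ρ : G → M →ₗ[ℚ] M
  ρ_one : ∀ m, ρ 1 m = m
  ρ_mul : ∀ g h m, ρ (g * h) m = ρ h (ρ g m)
  discrete : ∀ m, IsOpen {g : G | ρ g m = m}

attribute [instance] DRMod.acg DRMod.mod

/-- Morphisms of discrete right `ℚ[G]`-modules. -/
structure DRModHom {G : Type} [Group G] [TopologicalSpace G] (A B : DRMod G) where
  f : A.M →ₗ[ℚ] B.M
  comm : ∀ g m, f (A.ρ g m) = B.ρ g (f m)

/-- A diagram of discrete right `ℚ[G]`-modules of shape `(ι, E)`. -/
structure Diagram (G : Type) [Group G] [TopologicalSpace G] (ι : Type) (E : ι → ι → Type) where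
  obj : ι → DRMod G
  arr : ∀ {i j : ι}, E i j → DRModHom (obj i) (obj j)

/-- `L`, together with the projections `π`, is the limit — in the category of discrete right
`ℚ[G]`-modules — of the diagram `D`: it is the submodule of the product consisting of the
compatible families whose `G`-stabilizer is open. -/
def IsDLim {G : Type} [Group G] [TopologicalSpace G] {ι : Type} {E : ι → ι → Type}
    (D : Diagram G ι E) (L : DRMod G) (π : ∀ i, DRModHom L (D.obj i)) : Prop :=
  (∀ (i j : ι) (e : E i j) (x : L.M), (D.arr e).f ((π i).f x) = (π j).f x) ∧
  (∀ x y : L.M, (∀ i, (π i).f x = (π i).f y) → x = y) ∧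
  (∀ v : ∀ i, (D.obj i).M,
    (∀ (i j : ι) (e : E i j), (D.arr e).f (v i) = v j) →
    IsOpen {g : G | ∀ i, (D.obj i).ρ g (v i) = v i} →
    ∃ x : L.M, ∀ i, (π i).f x = v i)

section Tensor

variable {G : Type} [Group G] [TopologicalSpace G]

/-- The relation submodule defining `B ⊗_G M`. -/
def tensorRel (B : DRMod G) {M : Type} [AddCommGroup M] [Module ℚ M]
    (σ : G → M →ₗ[ℚ] M) : Submodule ℚ (B.M ⊗[ℚ] M) :=
  Submodule.span ℚ
    {z : B.M ⊗[ℚ] M | ∃ (g : G) (b : B.M) (m : M),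
      z = (B.ρ g b) ⊗ₜ[ℚ] m - b ⊗ₜ[ℚ] (σ g m)}

/-- The tensor product `B ⊗_G M` of a right `ℚ[G]`-module and a left `ℚ[G]`-module (with
action `σ`) over `G`: the quotient of `B ⊗_ℚ M` by the relations `bg ⊗ m = b ⊗ gm`. -/
def TensorG (B : DRMod G) {M : Type} [AddCommGroup M] [Module ℚ M]
    (σ : G → M →ₗ[ℚ] M) : Type :=
  (B.M ⊗[ℚ] M) ⧸ tensorRel B σ

instance (B : DRMod G) {M : Type} [AddCommGroup M] [Module ℚ M] (σ : G → M →ₗ[ℚ] M) :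
    AddCommGroup (TensorG B σ) :=
  inferInstanceAs (AddCommGroup ((B.M ⊗[ℚ] M) ⧸ tensorRel B σ))

instance (B : DRMod G) {M : Type} [AddCommGroup M] [Module ℚ M] (σ : G → M →ₗ[ℚ] M) :
    Module ℚ (TensorG B σ) :=
  inferInstanceAs (Module ℚ ((B.M ⊗[ℚ] M) ⧸ tensorRel B σ))

/-- The image of the pure tensor `b ⊗ m` in `B ⊗_G M`. -/
def TensorG.mk (B : DRMod G) {M : Type} [AddCommGroup M] [Module ℚ M]
    (σ : G → M →ₗ[ℚ] M) (b : B.M) (m : M) : TensorG B σ :=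
  Submodule.Quotient.mk (b ⊗ₜ[ℚ] m)

/-- Functoriality of `B ⊗_G M` in the right module `B`. -/
def tmapB {B B' : DRMod G} (h : DRModHom B B') {M : Type} [AddCommGroup M] [Module ℚ M]
    (σ : G → M →ₗ[ℚ] M) : TensorG B σ →ₗ[ℚ] TensorG B' σ :=
  Submodule.mapQ _ _ (TensorProduct.map h.f LinearMap.id) (by
    rw [tensorRel, Submodule.span_le]
    rintro z ⟨g, b, m, rfl⟩
    simp only [SetLike.mem_coe, Submodule.mem_comap, map_sub, TensorProduct.map_tmul,
      LinearMap.id_apply, h.comm]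
    exact Submodule.subset_span ⟨g, h.f b, m, rfl⟩)

@[simp] lemma tmapB_mk {B B' : DRMod G} (h : DRModHom B B') {M : Type} [AddCommGroup M]
    [Module ℚ M] (σ : G → M →ₗ[ℚ] M) (b : B.M) (m : M) :
    tmapB h σ (TensorG.mk B σ b m) = TensorG.mk B' σ (h.f b) m := rfl

/-- Functoriality of `B ⊗_G M` in the left module `M`. -/
def tmapM (B : DRMod G) {M M' : Type} [AddCommGroup M] [Module ℚ M] [AddCommGroup M']
    [Module ℚ M'] {σ : G → M →ₗ[ℚ] M} {σ' : G → M' →ₗ[ℚ] M'} (φ : M →ₗ[ℚ] M')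
    (hφ : ∀ g m, φ (σ g m) = σ' g (φ m)) : TensorG B σ →ₗ[ℚ] TensorG B σ' :=
  Submodule.mapQ _ _ (TensorProduct.map LinearMap.id φ) (by
    rw [tensorRel, Submodule.span_le]
    rintro z ⟨g, b, m, rfl⟩
    simp only [SetLike.mem_coe, Submodule.mem_comap, map_sub, TensorProduct.map_tmul,
      LinearMap.id_apply, hφ]
    exact Submodule.subset_span ⟨g, b, φ m, rfl⟩)

@[simp] lemma tmapM_mk (B : DRMod G) {M M' : Type} [AddCommGroup M] [Module ℚ M]
    [AddCommGroup M'] [Module ℚ M'] {σ : G → M →ₗ[ℚ] M} {σ' : G → M' →ₗ[ℚ] M'}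
    (φ : M →ₗ[ℚ] M') (hφ : ∀ g m, φ (σ g m) = σ' g (φ m)) (b : B.M) (m : M) :
    tmapM B φ hφ (TensorG.mk B σ b m) = TensorG.mk B σ' b (φ m) := rfl

lemma TensorG.hom_ext {B : DRMod G} {M : Type} [AddCommGroup M] [Module ℚ M]
    {σ : G → M →ₗ[ℚ] M} {N : Type} [AddCommGroup N] [Module ℚ N]
    {f g : TensorG B σ →ₗ[ℚ] N}
    (h : ∀ b m, f (TensorG.mk B σ b m) = g (TensorG.mk B σ b m)) : f = g := by
  refine Submodule.linearMap_qext _ (TensorProduct.ext' ?_)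
  intro b m
  exact h b m

end Tensor


/-- The submodule of compatible families in a product of `ℚ`-modules: the limit of the
corresponding diagram of abstract `ℚ`-modules. -/
def compatSub {ι : Type} {E : ι → ι → Type} {N : ι → Type} [∀ i, AddCommGroup (N i)]
    [∀ i, Module ℚ (N i)] (maps : ∀ i j, E i j → (N i →ₗ[ℚ] N j)) :
    Submodule ℚ (∀ i, N i) where
  carrier := {t | ∀ (i j : ι) (e : E i j), maps i j e (t i) = t j}
  add_mem' := fun {s t} hs ht i j e => by
    simp only [Pi.add_apply, map_add, hs i j e, ht i j e]
  zero_mem' := fun i j e => by simp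
  smul_mem' := fun q t ht i j e => by
    simp only [Pi.smul_apply, map_smul, ht i j e]

/-- The left `G`-action on the permutation module `ℚ[Ω]`. -/
def permσ {G : Type} [Group G] (Ω : GSet G) (g : G) :
    (Ω.carrier →₀ ℚ) →ₗ[ℚ] (Ω.carrier →₀ ℚ) :=
  Finsupp.lmapDomain ℚ ℚ (fun ω : Ω.carrier => g • ω)


set_option linter.unusedSectionVars false
set_option maxHeartbeats 1000000

namespace Avg

variable {G : Type} [Group G] [TopologicalSpace G] [IsTopologicalGroup G]

/-- The stabilizer subgroup of an element of a right module. -/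
def rstab (B : DRMod G) (b : B.M) : Subgroup G where
  carrier := {g | B.ρ g b = b}
  one_mem' := B.ρ_one b
  mul_mem' := by
    intro g h hg hh
    simp only [Set.mem_setOf_eq] at *
    rw [B.ρ_mul, hg, hh]
  inv_mem' := by
    intro g hg
    simp only [Set.mem_setOf_eq] at *
    have h1 : B.ρ (g * g⁻¹) b = b := by rw [mul_inv_cancel]; exact B.ρ_one b
    rw [B.ρ_mul, hg] at h1
    exact h1

def rstabU (B : DRMod G) (U : Subgroup G) (b : B.M) : Subgroup U :=
  (rstab B b).comap U.subtype

lemma mem_rstabU {B : DRMod G} {U : Subgroup G} {b : B.M} {u : U} :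
    u ∈ rstabU B U b ↔ B.ρ (u : G) b = b := Iff.rfl

lemma rstabU_isOpen (B : DRMod G) (U : Subgroup G) (b : B.M) :
    IsOpen ((rstabU B U b : Set U)) := by
  have h := (B.discrete b).preimage (continuous_subtype_val : Continuous ((↑) : U → G))
  exact h


/-- Average of `b` over representatives of `U ⧸ V`. -/
noncomputable def Fav (B : DRMod G) (U : Subgroup G) (V : Subgroup U) (b : B.M) : B.M :=
  (Nat.card (U ⧸ V) : ℚ)⁻¹ • ∑ᶠ c : U ⧸ V, B.ρ ((Quotient.out c : U) : G)⁻¹ b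

noncomputable def av (B : DRMod G) (U : Subgroup G) (b : B.M) : B.M :=
  Fav B U (rstabU B U b) b

lemma ρ_congr (B : DRMod G) {U : Subgroup G} {V : Subgroup U} {b : B.M}
    (hV : ∀ u : U, u ∈ V → B.ρ (u : G) b = b) {u w : U}
    (h : (QuotientGroup.mk u : U ⧸ V) = QuotientGroup.mk w) :
    B.ρ ((u : G))⁻¹ b = B.ρ ((w : G))⁻¹ b := by
  have hm : u⁻¹ * w ∈ V := QuotientGroup.eq.mp h
  have hw : w = u * (u⁻¹ * w) := by group
  have hcoe : (w : G) = (u : G) * ((u⁻¹ * w : U) : G) := by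
    rw [← Subgroup.coe_mul]; exact congrArg _ hw
  rw [hcoe, mul_inv_rev, B.ρ_mul]
  have : B.ρ (((u⁻¹ * w : U) : G))⁻¹ b = b := by
    have h1 := hV (u⁻¹ * w)⁻¹ (V.inv_mem hm)
    rwa [Subgroup.coe_inv] at h1
  rw [this]

lemma ρ_out_congr (B : DRMod G) {U : Subgroup G} {V : Subgroup U} {b : B.M}
    (hV : ∀ u : U, u ∈ V → B.ρ (u : G) b = b) (u : U) (c : U ⧸ V)
    (h : (QuotientGroup.mk u : U ⧸ V) = c) :
    B.ρ ((Quotient.out c : U) : G)⁻¹ b = B.ρ ((u : G))⁻¹ b := by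
  refine ρ_congr B hV ?_
  rw [h]
  exact Quotient.out_eq' c

lemma Fav_eq_of_le (B : DRMod G) {U : Subgroup G} {V W : Subgroup U} {b : B.M} (hVW : V ≤ W)
    (hW : ∀ u : U, u ∈ W → B.ρ (u : G) b = b) (hfin : Finite (U ⧸ V)) :
    Fav B U V b = Fav B U W b := by
  classical
  have hV : ∀ u : U, u ∈ V → B.ρ (u : G) b = b := fun u hu => hW u (hVW hu)
  set e := Subgroup.quotientEquivProdOfLE hVW with he
  haveI : Finite ((U ⧸ W) × (W ⧸ V.subgroupOf W)) := Finite.of_equiv _ e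
  haveI : Finite (U ⧸ W) :=
    Finite.of_surjective (Prod.fst : (U ⧸ W) × (W ⧸ V.subgroupOf W) → U ⧸ W) Prod.fst_surjective
  haveI : Finite (W ⧸ V.subgroupOf W) :=
    Finite.of_surjective (Prod.snd : (U ⧸ W) × (W ⧸ V.subgroupOf W) → W ⧸ V.subgroupOf W)
      Prod.snd_surjective
  letI := Fintype.ofFinite (U ⧸ V)
  letI := Fintype.ofFinite (U ⧸ W)
  letI := Fintype.ofFinite (W ⧸ V.subgroupOf W)
  have hterm : ∀ p : (U ⧸ W) × (W ⧸ V.subgroupOf W),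
      B.ρ ((Quotient.out (e.symm p) : U) : G)⁻¹ b
        = B.ρ ((Quotient.out p.1 : U) : G)⁻¹ b := by
    rintro ⟨d, k⟩
    refine Quotient.inductionOn' k fun w => ?_
    have h1 : e.symm (d, Quotient.mk'' w) = Quotient.mk'' ((Quotient.out d : U) * (w : U)) := by
      rw [he, Subgroup.quotientEquivProdOfLE_symm_apply]
      exact Quotient.map'_mk'' _ _ w
    have h2 : B.ρ ((Quotient.out (e.symm (d, Quotient.mk'' w)) : U) : G)⁻¹ b
        = B.ρ (((Quotient.out d : U) * (w : U) : U) : G)⁻¹ b := by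
      refine ρ_out_congr B hV _ _ ?_
      rw [h1]
    rw [h2]
    have h3 : (((Quotient.out d : U) * (w : U) : U) : G)⁻¹
        = ((w : U) : G)⁻¹ * ((Quotient.out d : U) : G)⁻¹ := by
      rw [Subgroup.coe_mul, mul_inv_rev]
    rw [h3, B.ρ_mul]
    congr 1
    have h4 := hW ((w : U))⁻¹ (W.inv_mem w.2)
    rwa [Subgroup.coe_inv] at h4
  have hsum : ∑ᶠ c : U ⧸ V, B.ρ ((Quotient.out c : U) : G)⁻¹ b
      = (Nat.card (W ⧸ V.subgroupOf W)) •
          ∑ᶠ d : U ⧸ W, B.ρ ((Quotient.out d : U) : G)⁻¹ b := by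
    rw [finsum_eq_sum_of_fintype, finsum_eq_sum_of_fintype]
    rw [← Equiv.sum_comp e.symm (fun c : U ⧸ V => B.ρ ((Quotient.out c : U) : G)⁻¹ b)]
    rw [Fintype.sum_prod_type]
    simp only [hterm]
    rw [Finset.sum_comm]
    simp [Finset.sum_const, Nat.card_eq_fintype_card, Finset.smul_sum]
  have hcard : Nat.card (U ⧸ V) = Nat.card (U ⧸ W) * Nat.card (W ⧸ V.subgroupOf W) := by
    rw [Nat.card_congr e, Nat.card_prod]
  have hKpos : 0 < Nat.card (W ⧸ V.subgroupOf W) := by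
    haveI : Nonempty (W ⧸ V.subgroupOf W) := ⟨QuotientGroup.mk 1⟩
    exact Nat.card_pos
  rw [Fav, Fav, hsum, hcard]
  rw [← Nat.cast_smul_eq_nsmul ℚ, smul_smul]
  congr 1
  push_cast
  rw [mul_inv, mul_assoc, inv_mul_cancel₀ (by exact_mod_cast hKpos.ne')]
  ring

lemma finite_quot {U : Subgroup G} (hU : IsCompact (U : Set G)) (V : Subgroup U)
    (hV : IsOpen (V : Set U)) : Finite (U ⧸ V) := by
  haveI : CompactSpace U := isCompact_iff_compactSpace.mp hU
  exact Subgroup.quotient_finite_of_isOpen V hV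

lemma finite_quot_rstabU (B : DRMod G) {U : Subgroup G} (hU : IsCompact (U : Set G)) (b : B.M) :
    Finite (U ⧸ rstabU B U b) :=
  finite_quot hU _ (rstabU_isOpen B U b)

lemma Fav_eq_av (B : DRMod G) {U : Subgroup G} (hU : IsCompact (U : Set G)) {V : Subgroup U}
    {b : B.M} (hVle : V ≤ rstabU B U b) (hVopen : IsOpen (V : Set U)) :
    Fav B U V b = av B U b :=
  Fav_eq_of_le B hVle (fun _ hu => hu) (finite_quot hU V hVopen)

lemma Fav_add (B : DRMod G) {U : Subgroup G} (V : Subgroup U) (hfin : Finite (U ⧸ V))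
    (x y : B.M) : Fav B U V (x + y) = Fav B U V x + Fav B U V y := by
  letI := Fintype.ofFinite (U ⧸ V)
  simp only [Fav, finsum_eq_sum_of_fintype, map_add, Finset.sum_add_distrib, smul_add]

lemma Fav_smul (B : DRMod G) {U : Subgroup G} (V : Subgroup U) (hfin : Finite (U ⧸ V))
    (q : ℚ) (x : B.M) : Fav B U V (q • x) = q • Fav B U V x := by
  letI := Fintype.ofFinite (U ⧸ V)
  simp only [Fav, finsum_eq_sum_of_fintype, map_smul, ← Finset.smul_sum]
  rw [smul_comm]

lemma av_add (B : DRMod G) {U : Subgroup G} (hU : IsCompact (U : Set G)) (x y : B.M) :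
    av B U (x + y) = av B U x + av B U y := by
  set V : Subgroup U := rstabU B U x ⊓ rstabU B U y with hV
  have hVopen : IsOpen (V : Set U) := (rstabU_isOpen B U x).inter (rstabU_isOpen B U y)
  have hVx : V ≤ rstabU B U x := inf_le_left
  have hVy : V ≤ rstabU B U y := inf_le_right
  have hVxy : V ≤ rstabU B U (x + y) := by
    intro u hu
    have h1 : B.ρ (u : G) x = x := hVx hu
    have h2 : B.ρ (u : G) y = y := hVy hu
    show B.ρ (u : G) (x + y) = x + y
    rw [map_add, h1, h2]
  rw [← Fav_eq_av B hU hVxy hVopen, ← Fav_eq_av B hU hVx hVopen, ← Fav_eq_av B hU hVy hVopen]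
  exact Fav_add B V (finite_quot hU V hVopen) x y

lemma av_smul (B : DRMod G) {U : Subgroup G} (hU : IsCompact (U : Set G)) (q : ℚ) (x : B.M) :
    av B U (q • x) = q • av B U x := by
  have hle : rstabU B U x ≤ rstabU B U (q • x) := by
    intro u hu
    show B.ρ (u : G) (q • x) = q • x
    rw [map_smul]
    exact congrArg _ hu
  rw [← Fav_eq_av B hU hle (rstabU_isOpen B U x)]
  rw [Fav_smul B _ (finite_quot_rstabU B hU x)]
  rfl

lemma av_eq_self (B : DRMod G) {U : Subgroup G} (hU : IsCompact (U : Set G)) {x : B.M}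
    (h : ∀ g ∈ U, B.ρ g x = x) : av B U x = x := by
  haveI := finite_quot_rstabU B hU x
  letI := Fintype.ofFinite (U ⧸ rstabU B U x)
  have hterm : ∀ c : U ⧸ rstabU B U x, B.ρ ((Quotient.out c : U) : G)⁻¹ x = x := by
    intro c
    exact h _ (U.inv_mem (Quotient.out c).2)
  rw [av, Fav, finsum_eq_sum_of_fintype]
  simp only [hterm, Finset.sum_const, Finset.card_univ, Nat.card_eq_fintype_card]
  rw [← Nat.cast_smul_eq_nsmul ℚ, smul_smul]
  have hpos : (0 : ℚ) < (Fintype.card (U ⧸ rstabU B U x) : ℚ) := by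
    exact_mod_cast Fintype.card_pos
  rw [inv_mul_cancel₀ hpos.ne', one_smul]

lemma av_invariant (B : DRMod G) {U : Subgroup G} (hU : IsCompact (U : Set G)) {g : G}
    (hg : g ∈ U) (x : B.M) : B.ρ g (av B U x) = av B U x := by
  classical
  set S := rstabU B U x with hS
  haveI := finite_quot_rstabU B hU x
  letI := Fintype.ofFinite (U ⧸ S)
  set gU : U := ⟨g, hg⟩ with hgU
  have hSx : ∀ u : U, u ∈ S → B.ρ (u : G) x = x := fun _ hu => hu
  have hterm : ∀ c : U ⧸ S,
      B.ρ g (B.ρ ((Quotient.out c : U) : G)⁻¹ x)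
        = B.ρ ((Quotient.out (gU⁻¹ • c) : U) : G)⁻¹ x := by
    intro c
    rw [← B.ρ_mul]
    have h1 : ((Quotient.out c : U) : G)⁻¹ * g = ((gU⁻¹ * Quotient.out c : U) : G)⁻¹ := by
      rw [Subgroup.coe_mul, mul_inv_rev, Subgroup.coe_inv, inv_inv]
    rw [h1]
    refine (ρ_out_congr B hSx (gU⁻¹ * Quotient.out c) (gU⁻¹ • c) ?_).symm
    have h2 : (QuotientGroup.mk (gU⁻¹ * Quotient.out c) : U ⧸ S)
        = gU⁻¹ • (QuotientGroup.mk (Quotient.out c) : U ⧸ S) := by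
      rw [MulAction.Quotient.smul_mk]
      rfl
    rw [h2, QuotientGroup.out_eq']
  rw [av, ← hS, Fav, finsum_eq_sum_of_fintype, map_smul, map_sum]
  simp only [hterm]
  congr 1
  exact Equiv.sum_comp (MulAction.toPerm gU⁻¹)
    (fun c : U ⧸ S => B.ρ ((Quotient.out c : U) : G)⁻¹ x)

lemma av_rho (B : DRMod G) {U : Subgroup G} (hU : IsCompact (U : Set G)) {g : G}
    (hg : g ∈ U) (x : B.M) : av B U (B.ρ g x) = av B U x := by
  classical
  set gU : U := ⟨g, hg⟩ with hgU
  set S : Subgroup U := rstabU B U x with hS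
  set S' : Subgroup U := rstabU B U (B.ρ g x) with hS'
  have hSx : ∀ u : U, u ∈ S → B.ρ (u : G) x = x := fun _ hu => hu
  have hconj : ∀ s : U, s ∈ S' → gU * s * gU⁻¹ ∈ S := by
    intro s hs
    have hs' : B.ρ (s : G) (B.ρ g x) = B.ρ g x := hs
    show B.ρ ((gU * s * gU⁻¹ : U) : G) x = x
    have hc : ((gU * s * gU⁻¹ : U) : G) = g * (s : G) * g⁻¹ := by
      push_cast [hgU]; ring_nf
    rw [hc]
    have h1 : B.ρ (g * (s : G) * g⁻¹) x = B.ρ g⁻¹ (B.ρ (s : G) (B.ρ g x)) := by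
      rw [B.ρ_mul (g * (s : G)) g⁻¹, B.ρ_mul]
    rw [h1, hs', ← B.ρ_mul, mul_inv_cancel, B.ρ_one]
  have hconj' : ∀ s : U, s ∈ S → gU⁻¹ * s * gU ∈ S' := by
    intro s hs
    have hs' : B.ρ (s : G) x = x := hs
    show B.ρ ((gU⁻¹ * s * gU : U) : G) (B.ρ g x) = B.ρ g x
    have hc : ((gU⁻¹ * s * gU : U) : G) = g⁻¹ * (s : G) * g := by
      push_cast [hgU]; ring_nf
    rw [hc, ← B.ρ_mul]
    have h2 : g * (g⁻¹ * (s : G) * g) = (s : G) * g := by group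
    rw [h2, B.ρ_mul, hs']
  set e : (U ⧸ S') ≃ (U ⧸ S) :=
    { toFun := fun c => Quotient.liftOn' c (fun w => (QuotientGroup.mk (w * gU⁻¹) : U ⧸ S))
        (by
          intro a b hab
          rw [QuotientGroup.leftRel_apply] at hab
          refine Quotient.sound' ?_
          rw [QuotientGroup.leftRel_apply]
          have : (a * gU⁻¹)⁻¹ * (b * gU⁻¹) = gU * (a⁻¹ * b) * gU⁻¹ := by group
          rw [this]
          exact hconj _ hab)
      invFun := fun c => Quotient.liftOn' c (fun w => (QuotientGroup.mk (w * gU) : U ⧸ S'))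
        (by
          intro a b hab
          rw [QuotientGroup.leftRel_apply] at hab
          refine Quotient.sound' ?_
          rw [QuotientGroup.leftRel_apply]
          have : (a * gU)⁻¹ * (b * gU) = gU⁻¹ * (a⁻¹ * b) * gU := by group
          rw [this]
          exact hconj' _ hab)
      left_inv := by
        refine Quotient.ind' fun w => ?_
        simp only [Quotient.liftOn'_mk'']
        exact congrArg QuotientGroup.mk (by group)
      right_inv := by
        refine Quotient.ind' fun w => ?_
        simp only [Quotient.liftOn'_mk'']
        exact congrArg QuotientGroup.mk (by group) } with he
  haveI : Finite (U ⧸ S') := finite_quot_rstabU B hU (B.ρ g x)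
  haveI : Finite (U ⧸ S) := finite_quot_rstabU B hU x
  letI := Fintype.ofFinite (U ⧸ S')
  letI := Fintype.ofFinite (U ⧸ S)
  have hterm : ∀ c : U ⧸ S',
      B.ρ ((Quotient.out c : U) : G)⁻¹ (B.ρ g x)
        = B.ρ ((Quotient.out (e c) : U) : G)⁻¹ x := by
    intro c
    rw [← B.ρ_mul]
    have h1 : g * ((Quotient.out c : U) : G)⁻¹ = (((Quotient.out c * gU⁻¹ : U)) : G)⁻¹ := by
      push_cast [hgU]
      group
    rw [h1]
    refine (ρ_out_congr B hSx (Quotient.out c * gU⁻¹) (e c) ?_).symm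
    conv_rhs => rw [← QuotientGroup.out_eq' c]
    rfl
  have hcard : Nat.card (U ⧸ S') = Nat.card (U ⧸ S) := Nat.card_congr e
  show Fav B U S' (B.ρ g x) = Fav B U S x
  rw [Fav, Fav, hcard, finsum_eq_sum_of_fintype, finsum_eq_sum_of_fintype]
  congr 1
  simp only [hterm]
  exact Equiv.sum_comp e (fun d : U ⧸ S => B.ρ ((Quotient.out d : U) : G)⁻¹ x)

lemma av_natural {B B' : DRMod G} (f : B.M →ₗ[ℚ] B'.M)
    (hf : ∀ (g : G) (m : B.M), f (B.ρ g m) = B'.ρ g (f m)) {U : Subgroup G}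
    (hU : IsCompact (U : Set G)) (x : B.M) :
    f (av B U x) = av B' U (f x) := by
  set S : Subgroup U := rstabU B U x with hS
  have hle : S ≤ rstabU B' U (f x) := by
    intro u hu
    have hu' : B.ρ (u : G) x = x := hu
    show B'.ρ (u : G) (f x) = f x
    rw [← hf, hu']
  haveI : Finite (U ⧸ S) := finite_quot_rstabU B hU x
  letI := Fintype.ofFinite (U ⧸ S)
  have h1 : f (av B U x) = Fav B' U S (f x) := by
    rw [av, ← hS, Fav, Fav, finsum_eq_sum_of_fintype, finsum_eq_sum_of_fintype,
      map_smul, map_sum]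
    simp only [hf]
  rw [h1]
  exact Fav_eq_av B' hU hle (rstabU_isOpen B U x)

end Avg

namespace Perm

variable {G : Type} [Group G] [TopologicalSpace G] [IsTopologicalGroup G] (Ω : GSet G)

abbrev Jt : Type := Quotient (MulAction.orbitRel G Ω.carrier)

def repO (j : Jt Ω) : Ω.carrier := Quotient.out j

def jOf (ω : Ω.carrier) : Jt Ω := Quotient.mk (MulAction.orbitRel G Ω.carrier) ω

lemma jOf_repO (j : Jt Ω) : jOf Ω (repO Ω j) = j := Quotient.out_eq j

lemma jOf_smul (g : G) (ω : Ω.carrier) : jOf Ω (g • ω) = jOf Ω ω :=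
  Quotient.sound (MulAction.mem_orbit ω g)

lemma exists_gOf (ω : Ω.carrier) : ∃ g : G, g • repO Ω (jOf Ω ω) = ω := by
  have h : Quotient.mk (MulAction.orbitRel G Ω.carrier) (repO Ω (jOf Ω ω)) = jOf Ω ω :=
    Quotient.out_eq _
  have h2 : repO Ω (jOf Ω ω) ∈ MulAction.orbit G ω := Quotient.exact h
  obtain ⟨g, hg⟩ := h2
  exact ⟨g⁻¹, by rw [← hg]; exact inv_smul_smul g ω⟩

noncomputable def gOf (ω : Ω.carrier) : G := (exists_gOf Ω ω).choose

lemma gOf_spec (ω : Ω.carrier) : gOf Ω ω • repO Ω (jOf Ω ω) = ω := (exists_gOf Ω ω).choose_spec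

def Uj (j : Jt Ω) : Subgroup G := MulAction.stabilizer G (repO Ω j)

lemma Uj_isCompact (hcpt : CompactStabilizers G Ω.carrier) (j : Jt Ω) :
    IsCompact ((Uj Ω j : Set G)) := by
  have hset : ((Uj Ω j : Set G)) = {g : G | g • repO Ω j = repO Ω j} := by
    ext g; simp [Uj, MulAction.mem_stabilizer_iff]
  rw [hset]; exact hcpt _

lemma Uj_isOpen (hopen : OpenStabilizers G Ω.carrier) (j : Jt Ω) :
    IsOpen ((Uj Ω j : Set G)) := by
  have hset : ((Uj Ω j : Set G)) = {g : G | g • repO Ω j = repO Ω j} := by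
    ext g; simp [Uj, MulAction.mem_stabilizer_iff]
  rw [hset]; exact hopen _

variable (B : DRMod G)

noncomputable def mkL (m : Ω.carrier →₀ ℚ) : B.M →ₗ[ℚ] TensorG B (permσ Ω) :=
  (tensorRel B (permσ Ω)).mkQ.comp ((TensorProduct.mk ℚ B.M (Ω.carrier →₀ ℚ)).flip m)

lemma mkL_apply (m : Ω.carrier →₀ ℚ) (b : B.M) :
    mkL Ω B m b = TensorG.mk B (permσ Ω) b m := rfl

lemma mk_rho (g : G) (b : B.M) (m : Ω.carrier →₀ ℚ) :
    TensorG.mk B (permσ Ω) (B.ρ g b) m = TensorG.mk B (permσ Ω) b (permσ Ω g m) := by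
  erw [TensorG.mk, TensorG.mk, Submodule.Quotient.eq]
  exact Submodule.subset_span ⟨g, b, m, rfl⟩

lemma mk_zero_m (b : B.M) : TensorG.mk B (permσ Ω) b 0 = 0 := by
  rw [TensorG.mk, TensorProduct.tmul_zero]
  exact Submodule.Quotient.mk_zero _

lemma mk_add_m (b : B.M) (m m' : Ω.carrier →₀ ℚ) :
    TensorG.mk B (permσ Ω) b (m + m')
      = TensorG.mk B (permσ Ω) b m + TensorG.mk B (permσ Ω) b m' := by
  rw [TensorG.mk, TensorG.mk, TensorG.mk, TensorProduct.tmul_add]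
  rfl

lemma mk_smul_m (b : B.M) (q : ℚ) (m : Ω.carrier →₀ ℚ) :
    TensorG.mk B (permσ Ω) b (q • m) = q • TensorG.mk B (permσ Ω) b m := by
  rw [TensorG.mk, TensorG.mk, TensorProduct.tmul_smul]
  rfl

lemma permσ_single (g : G) (ω : Ω.carrier) (q : ℚ) :
    permσ Ω g (Finsupp.single ω q) = Finsupp.single (g • ω) q := by
  simp [permσ, Finsupp.mapDomain_single]

noncomputable def avL (U : Subgroup G) (hU : IsCompact (U : Set G)) : B.M →ₗ[ℚ] B.M where
  toFun := Avg.av B U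
  map_add' := Avg.av_add B hU
  map_smul' := Avg.av_smul B hU

variable [DecidableEq (Jt Ω)]

noncomputable def ellmap (hcpt : CompactStabilizers G Ω.carrier) (ω : Ω.carrier) :
    B.M →ₗ[ℚ] (Jt Ω → B.M) :=
  LinearMap.single ℚ (fun _ : Jt Ω => B.M) (jOf Ω ω) ∘ₗ
    avL B (Uj Ω (jOf Ω ω)) (Uj_isCompact Ω hcpt _) ∘ₗ B.ρ (gOf Ω ω)

lemma ellmap_apply (hcpt : CompactStabilizers G Ω.carrier) (ω : Ω.carrier) (b : B.M) :
    ellmap Ω B hcpt ω b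
      = Pi.single (jOf Ω ω) (Avg.av B (Uj Ω (jOf Ω ω)) (B.ρ (gOf Ω ω) b)) := rfl

lemma ell_rel (hcpt : CompactStabilizers G Ω.carrier) (g : G) (ω : Ω.carrier) (b : B.M) :
    ellmap Ω B hcpt ω (B.ρ g b) = ellmap Ω B hcpt (g • ω) b := by
  have hj : jOf Ω (g • ω) = jOf Ω ω := jOf_smul Ω g ω
  rw [ellmap_apply, ellmap_apply]
  set j := jOf Ω ω with hjdef
  rw [hj]
  refine congrArg (Pi.single j) ?_
  have hspec1 : gOf Ω ω • repO Ω j = ω := gOf_spec Ω ω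
  have hspec2 : gOf Ω (g • ω) • repO Ω j = g • ω := by
    have := gOf_spec Ω (g • ω); rwa [hj] at this
  set u : G := (gOf Ω (g • ω))⁻¹ * (g * gOf Ω ω) with hu
  have hmem : u ∈ Uj Ω j := by
    have : u • repO Ω j = repO Ω j := by
      rw [hu, mul_smul, mul_smul, hspec1, inv_smul_eq_iff]
      exact hspec2.symm
    exact this
  have h1 : B.ρ (gOf Ω ω) (B.ρ g b) = B.ρ u (B.ρ (gOf Ω (g • ω)) b) := by
    rw [← B.ρ_mul, ← B.ρ_mul]
    congr 1
    rw [hu]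
    group
  rw [h1]
  exact Avg.av_rho B (Uj_isCompact Ω hcpt j) hmem _


noncomputable def Phi (hcpt : CompactStabilizers G Ω.carrier) :
    TensorG B (permσ Ω) →ₗ[ℚ] (Jt Ω → B.M) :=
  Submodule.liftQ _
    (TensorProduct.lift (Finsupp.linearCombination ℚ (fun ω => ellmap Ω B hcpt ω)).flip)
    (by
      rw [tensorRel, Submodule.span_le]
      rintro z ⟨g, b, m, rfl⟩
      simp only [SetLike.mem_coe, LinearMap.mem_ker, map_sub, sub_eq_zero,
        TensorProduct.lift.tmul, LinearMap.flip_apply]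
      induction m using Finsupp.induction_linear with
      | zero => simp
      | add m m' hm hm' => simp only [map_add, LinearMap.add_apply, hm, hm']
      | single ω q =>
        rw [permσ_single, Finsupp.linearCombination_single, Finsupp.linearCombination_single]
        simp only [LinearMap.smul_apply]
        rw [ell_rel Ω B hcpt g ω b])

lemma Phi_mk (hcpt : CompactStabilizers G Ω.carrier) (b : B.M) (ω : Ω.carrier) (q : ℚ) :
    Phi Ω B hcpt (TensorG.mk B (permσ Ω) b (Finsupp.single ω q))
      = q • ellmap Ω B hcpt ω b := by
  rw [TensorG.mk, Phi]
  erw [Submodule.liftQ_apply, TensorProduct.lift.tmul]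
  rw [LinearMap.flip_apply, Finsupp.linearCombination_single, LinearMap.smul_apply]

variable [Fintype (Jt Ω)]

noncomputable def Psi : (Jt Ω → B.M) →ₗ[ℚ] TensorG B (permσ Ω) :=
  ∑ j : Jt Ω, (mkL Ω B (Finsupp.single (repO Ω j) 1)).comp (LinearMap.proj j)

lemma Psi_apply (v : Jt Ω → B.M) :
    Psi Ω B v = ∑ j : Jt Ω, TensorG.mk B (permσ Ω) (v j) (Finsupp.single (repO Ω j) 1) := by
  rw [Psi, LinearMap.sum_apply]
  rfl

lemma Psi_single (j : Jt Ω) (y : B.M) :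
    Psi Ω B (Pi.single j y) = TensorG.mk B (permσ Ω) y (Finsupp.single (repO Ω j) 1) := by
  rw [Psi_apply]
  refine Finset.sum_eq_single_of_mem j (Finset.mem_univ j) ?_ |>.trans ?_
  · intro j' _ hne
    rw [Pi.single_eq_of_ne hne]
    have : TensorG.mk B (permσ Ω) (0 : B.M) (Finsupp.single (repO Ω j') 1)
        = mkL Ω B (Finsupp.single (repO Ω j') 1) 0 := rfl
    rw [this, map_zero]
  · rw [Pi.single_eq_same]

lemma mk_av (hcpt : CompactStabilizers G Ω.carrier) (j : Jt Ω) (x : B.M) :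
    TensorG.mk B (permσ Ω) (Avg.av B (Uj Ω j) x) (Finsupp.single (repO Ω j) 1)
      = TensorG.mk B (permσ Ω) x (Finsupp.single (repO Ω j) 1) := by
  set U := Uj Ω j with hU
  haveI := Avg.finite_quot_rstabU B (Uj_isCompact Ω hcpt j) x
  letI := Fintype.ofFinite (U ⧸ Avg.rstabU B U x)
  have happ : TensorG.mk B (permσ Ω) (Avg.av B U x) (Finsupp.single (repO Ω j) 1)
      = mkL Ω B (Finsupp.single (repO Ω j) 1) (Avg.av B U x) := rfl
  rw [happ, Avg.av, Avg.Fav, finsum_eq_sum_of_fintype, map_smul, map_sum]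
  have hterm : ∀ c : U ⧸ Avg.rstabU B U x,
      mkL Ω B (Finsupp.single (repO Ω j) 1) (B.ρ ((Quotient.out c : U) : G)⁻¹ x)
        = TensorG.mk B (permσ Ω) x (Finsupp.single (repO Ω j) 1) := by
    intro c
    rw [mkL_apply, mk_rho, permσ_single]
    congr 2
    have hmem : ((Quotient.out c : U) : G)⁻¹ ∈ Uj Ω j := U.inv_mem (Quotient.out c).2
    exact hmem
  simp only [hterm, Finset.sum_const, Finset.card_univ, ← Nat.card_eq_fintype_card]
  rw [← Nat.cast_smul_eq_nsmul ℚ, smul_smul]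
  have hpos : (0 : ℚ) < (Nat.card (U ⧸ Avg.rstabU B U x) : ℚ) := by
    haveI : Nonempty (U ⧸ Avg.rstabU B U x) := ⟨QuotientGroup.mk 1⟩
    exact_mod_cast Nat.card_pos
  rw [inv_mul_cancel₀ hpos.ne', one_smul]

lemma Psi_Phi (hcpt : CompactStabilizers G Ω.carrier) (x : TensorG B (permσ Ω)) :
    Psi Ω B (Phi Ω B hcpt x) = x := by
  have h : (Psi Ω B).comp (Phi Ω B hcpt) = LinearMap.id := by
    refine TensorG.hom_ext ?_
    intro b m
    simp only [LinearMap.comp_apply, LinearMap.id_apply]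
    induction m using Finsupp.induction_linear with
    | zero => rw [mk_zero_m]; simp
    | add m m' hm hm' => rw [mk_add_m, map_add, map_add, hm, hm', ← mk_add_m]
    | single ω q =>
      rw [Phi_mk, map_smul, ellmap_apply, Psi_single, mk_av Ω B hcpt, mk_rho, permσ_single,
        gOf_spec]
      rw [← mk_smul_m]
      congr 1
      rw [Finsupp.smul_single, smul_eq_mul, mul_one]
  calc Psi Ω B (Phi Ω B hcpt x) = ((Psi Ω B).comp (Phi Ω B hcpt)) x := rfl
  _ = x := by rw [h]; rfl

lemma Phi_natural {B B' : DRMod G} (h : DRModHom B B') (hcpt : CompactStabilizers G Ω.carrier)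
    (x : TensorG B (permσ Ω)) :
    Phi Ω B' hcpt (tmapB h (permσ Ω) x) = fun j => h.f (Phi Ω B hcpt x j) := by
  have key : (Phi Ω B' hcpt).comp (tmapB h (permσ Ω))
      = (LinearMap.pi (fun j : Jt Ω => h.f.comp (LinearMap.proj j))).comp (Phi Ω B hcpt) := by
    refine TensorG.hom_ext ?_
    intro b m
    simp only [LinearMap.comp_apply]
    induction m using Finsupp.induction_linear with
    | zero => rw [mk_zero_m]; simp
    | add m m' hm hm' => rw [mk_add_m]; simp only [map_add, hm, hm']
    | single ω q =>
      rw [tmapB_mk, Phi_mk, Phi_mk, map_smul]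
      congr 1
      funext j
      rw [ellmap_apply, ellmap_apply]
      simp only [LinearMap.pi_apply, LinearMap.comp_apply, LinearMap.proj_apply]
      by_cases hj : j = jOf Ω ω
      · subst hj
        rw [Pi.single_eq_same, Pi.single_eq_same, ← h.comm]
        exact (Avg.av_natural h.f h.comm (Uj_isCompact Ω hcpt _) _).symm
      · rw [Pi.single_eq_of_ne hj, Pi.single_eq_of_ne hj, map_zero]
  have := congrArg (fun f => f x) key
  exact this

lemma Psi_natural {B B' : DRMod G} (h : DRModHom B B') (v : Jt Ω → B.M) :
    tmapB h (permσ Ω) (Psi Ω B v) = Psi Ω B' (fun j => h.f (v j)) := by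
  rw [Psi_apply, Psi_apply, map_sum]
  refine Finset.sum_congr rfl fun j _ => ?_
  rw [tmapB_mk]

lemma Phi_invariant (hcpt : CompactStabilizers G Ω.carrier) (x : TensorG B (permσ Ω))
    (j : Jt Ω) {g : G} (hg : g ∈ Uj Ω j) : B.ρ g (Phi Ω B hcpt x j) = Phi Ω B hcpt x j := by
  set Inv : Submodule ℚ B.M :=
    { carrier := {m : B.M | ∀ g' ∈ Uj Ω j, B.ρ g' m = m}
      add_mem' := by
        intro a b ha hb g' hg'
        rw [map_add, ha g' hg', hb g' hg']
      zero_mem' := by intro g' _; rw [map_zero]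
      smul_mem' := by
        intro q a ha g' hg'
        rw [map_smul, ha g' hg'] } with hInv
  suffices hmem : Phi Ω B hcpt x j ∈ Inv by exact hmem g hg
  obtain ⟨z, rfl⟩ := Submodule.Quotient.mk_surjective _ x
  have hz : Phi Ω B hcpt (Submodule.Quotient.mk z)
      = TensorProduct.lift (Finsupp.linearCombination ℚ (fun ω => ellmap Ω B hcpt ω)).flip z := by
    rw [Phi]
    erw [Submodule.liftQ_apply]
  rw [hz]
  clear hz
  induction z using TensorProduct.induction_on with
  | zero => rw [map_zero]; exact Inv.zero_mem
  | add z z' hz hz' => rw [map_add]; exact Inv.add_mem hz hz'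
  | tmul b m =>
    rw [TensorProduct.lift.tmul, LinearMap.flip_apply, Finsupp.linearCombination_apply,
      Finsupp.sum, LinearMap.coe_sum, Finset.sum_apply, Finset.sum_apply]
    refine Submodule.sum_mem Inv fun ω _ => ?_
    simp only [LinearMap.smul_apply, Pi.smul_apply]
    refine Inv.smul_mem _ ?_
    rw [ellmap_apply]
    by_cases hj : j = jOf Ω ω
    · subst hj
      rw [Pi.single_eq_same]
      intro g' hg'
      exact Avg.av_invariant B (Uj_isCompact Ω hcpt _) hg' _
    · rw [Pi.single_eq_of_ne (hj)]
      exact Inv.zero_mem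

end Perm


/-- Let `G` be a t.d.l.c. group and `P = ℚ[Ω]` a finitely generated proper
discrete permutation `ℚ[G]`-module.  Then `— ⊗_G P` commutes with limits: for every diagram
`M_*` of discrete right `ℚ[G]`-modules, the natural homomorphism
`(d lim M_*) ⊗_G P → lim (M_* ⊗_G P)` is an isomorphism of `ℚ`-modules, where `d lim` is the
limit in discrete `ℚ[G]`-modules and `lim` the limit of abstract `ℚ`-modules. -/
theorem tensor_fgPerm_commutes_with_dlim (G : Type) [Group G] [TopologicalSpace G]
    [IsTopologicalGroup G] [LocallyCompactSpace G] [TotallyDisconnectedSpace G] [T2Space G]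
    (Ω : GSet G) (hopen : OpenStabilizers G Ω.carrier)
    (hcpt : CompactStabilizers G Ω.carrier) (hfg : FinitelyManyOrbits G Ω.carrier)
    (ι : Type) (E : ι → ι → Type) (D : Diagram G ι E)
    (L : DRMod G) (π : ∀ i, DRModHom L (D.obj i)) (hL : IsDLim D L π) :
    Function.Injective
      (LinearMap.pi (fun i => tmapB (π i) (permσ Ω)) :
        TensorG L (permσ Ω) →ₗ[ℚ] ∀ i, TensorG (D.obj i) (permσ Ω)) ∧
    LinearMap.range
      (LinearMap.pi (fun i => tmapB (π i) (permσ Ω)) :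
        TensorG L (permσ Ω) →ₗ[ℚ] ∀ i, TensorG (D.obj i) (permσ Ω)) =
      compatSub (N := fun i => TensorG (D.obj i) (permσ Ω))
        (fun _ _ e => tmapB (D.arr e) (permσ Ω)) := by
  classical
  letI : DecidableEq (Perm.Jt Ω) := Classical.decEq _
  haveI hfin : Finite (Perm.Jt Ω) := hfg
  letI : Fintype (Perm.Jt Ω) := Fintype.ofFinite _
  constructor
  · intro x y hxy
    have hc : ∀ i, tmapB (π i) (permσ Ω) x = tmapB (π i) (permσ Ω) y := by
      intro i
      have := congrFun hxy i
      simpa [LinearMap.pi_apply] using this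
    have hPhi : Perm.Phi Ω L hcpt x = Perm.Phi Ω L hcpt y := by
      funext j
      refine hL.2.1 _ _ fun i => ?_
      have h1 := congrFun (Perm.Phi_natural Ω (π i) hcpt x) j
      have h2 := congrFun (Perm.Phi_natural Ω (π i) hcpt y) j
      rw [← h1, ← h2, hc i]
    calc x = Perm.Psi Ω L (Perm.Phi Ω L hcpt x) := (Perm.Psi_Phi Ω L hcpt x).symm
      _ = Perm.Psi Ω L (Perm.Phi Ω L hcpt y) := by rw [hPhi]
      _ = y := Perm.Psi_Phi Ω L hcpt y
  · ext t
    constructor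
    · rintro ⟨x, rfl⟩
      intro i i' e
      simp only [LinearMap.pi_apply]
      have key : (tmapB (D.arr e) (permσ Ω)).comp (tmapB (π i) (permσ Ω))
          = tmapB (π i') (permσ Ω) := by
        refine TensorG.hom_ext fun b m => ?_
        simp only [LinearMap.comp_apply, tmapB_mk]
        rw [hL.1 i i' e b]
      have hx := congrArg (fun f => f x) key
      simpa using hx
    · intro ht
      have ht' : ∀ (i i' : ι) (e : E i i'),
          tmapB (D.arr e) (permσ Ω) (t i) = t i' := ht
      have hv : ∀ j : Perm.Jt Ω, ∃ x : L.M, ∀ i,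
          (π i).f x = Perm.Phi Ω (D.obj i) hcpt (t i) j := by
        intro j
        set v : ∀ i, (D.obj i).M := fun i => Perm.Phi Ω (D.obj i) hcpt (t i) j with hvdef
        have hcompat : ∀ (i i' : ι) (e : E i i'), (D.arr e).f (v i) = v i' := by
          intro i i' e
          have h1 := congrFun (Perm.Phi_natural Ω (D.arr e) hcpt (t i)) j
          show (D.arr e).f (Perm.Phi Ω (D.obj i) hcpt (t i) j)
              = Perm.Phi Ω (D.obj i') hcpt (t i') j
          rw [← h1, ht' i i' e]
        set S : Subgroup G :=
          { carrier := {g : G | ∀ i, (D.obj i).ρ g (v i) = v i}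
            one_mem' := fun i => (D.obj i).ρ_one (v i)
            mul_mem' := by
              intro a b ha hb i
              rw [(D.obj i).ρ_mul, ha i, hb i]
            inv_mem' := by
              intro a ha i
              have h1 : (D.obj i).ρ (a * a⁻¹) (v i) = (D.obj i).ρ a⁻¹ ((D.obj i).ρ a (v i)) :=
                (D.obj i).ρ_mul a a⁻¹ (v i)
              rw [mul_inv_cancel, (D.obj i).ρ_one, ha i] at h1
              exact h1.symm } with hSdef
        have hle : Perm.Uj Ω j ≤ S := by
          intro g hg i
          exact Perm.Phi_invariant Ω (D.obj i) hcpt (t i) j hg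
        have hSopen : IsOpen {g : G | ∀ i, (D.obj i).ρ g (v i) = v i} :=
          Subgroup.isOpen_mono hle (Perm.Uj_isOpen Ω hopen j)
        exact hL.2.2 v hcompat hSopen
      choose xs hxs using hv
      refine ⟨Perm.Psi Ω L xs, ?_⟩
      funext i
      simp only [LinearMap.pi_apply]
      rw [Perm.Psi_natural Ω (π i) xs]
      have hx : (fun j => (π i).f (xs j)) = Perm.Phi Ω (D.obj i) hcpt (t i) := by
        funext j; exact hxs j i
      rw [hx]
      exact Perm.Psi_Phi Ω (D.obj i) hcpt (t i)
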